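/- In Example 1, the QP min ‖u − (−2, 0)‖² over u ∈ ℝ² subject to u₁ ≤ 1 and −u₁ − x·u₂ ≤ −(1+x) has solution π_qp(x) = (1, 1) for x ∈ (0, 1/3], and π_qp(x) = ((1 + x − 2x²)/(1 + x²), (3x + x²)/(1 + x²)) for other x ∈ [−2, 2] (with x ≠ 0 handled by the formula, which gives (1,0) at x=0); in particular the solution map is discontinuous at x = 0, since the limit from the right along x ∈ (0,1/3] is (1,1) while π_qp(0) = (1,0). -/

import Mathlib

/-! `K1 x` is convex, so the nearest point to `π_des` is unique and it suffices to exhibit one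
minimiser. For `0 < x ≤ 1/3` the point `(1, 1)` is one: with `d = 1 - u₀ ≥ 0`, feasibility
forces `u₁ ≥ 1 + d / x ≥ 1 + 3d`, whence `‖u - π_des‖² ≥ (3 - d)² + (1 + 3d)² ≥ 10`. Otherwise
the projection of `π_des` onto the line `u₀ + x u₁ = 1 + x` is feasible, and Cauchy–Schwarz
shows that every `u` in the half-plane `u₀ + x u₁ ≥ 1 + x` is at least as far from `π_des`. -/

/-- The constraint set of Example 1. -/
def K1 (x : ℝ) : Set (EuclideanSpace ℝ (Fin 2)) :=
  {u | u 0 ≤ 1 ∧ -(u 0) - x * u 1 ≤ -(1 + x)}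

/-- The desired point `π_des = (−2, 0)` of Example 1. -/
noncomputable def pdes1 : EuclideanSpace ℝ (Fin 2) :=
  (WithLp.equiv 2 (Fin 2 → ℝ)).symm ![-2, 0]

open Filter Topology

theorem eq_of_forall_norm_sub_le_of_convex {E : Type*} [NormedAddCommGroup E]
    [InnerProductSpace ℝ E] {s : Set E} (hs : Convex ℝ s) {p a b : E} (ha : a ∈ s) (hb : b ∈ s)
    (ha_min : ∀ u ∈ s, ‖a - p‖ ≤ ‖u - p‖) (hb_min : ∀ u ∈ s, ‖b - p‖ ≤ ‖u - p‖) : a = b := by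
  have hmid : (1 / 2 : ℝ) • a + (1 / 2 : ℝ) • b ∈ s :=
    hs ha hb (by norm_num) (by norm_num) (by norm_num)
  have hab : ‖a - p‖ = ‖b - p‖ := le_antisymm (ha_min b hb) (hb_min a ha)
  have hmid_le : ‖a - p‖ ≤ ‖(a - p) + (b - p)‖ / 2 := by
    have hmid_sub : (1 / 2 : ℝ) • a + (1 / 2 : ℝ) • b - p = (1 / 2 : ℝ) • ((a - p) + (b - p)) := by
      module
    have := ha_min _ hmid
    rwa [hmid_sub, norm_smul, Real.norm_of_nonneg (by norm_num), one_div_mul_eq_div] at this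
  have h := parallelogram_law_with_norm ℝ (a - p) (b - p)
  rw [sub_sub_sub_cancel_right] at h
  have : ‖a - b‖ * ‖a - b‖ ≤ 0 := by nlinarith [norm_nonneg (a - p)]
  exact sub_eq_zero.1 (norm_eq_zero.1 (mul_self_eq_zero.1 (le_antisymm this (mul_self_nonneg _))))

theorem convex_K1 (x : ℝ) : Convex ℝ (K1 x) := by
  intro u hu v hv a b ha hb hab
  simp only [K1, Set.mem_ofPred_eq, PiLp.add_apply, PiLp.smul_apply, smul_eq_mul] at hu hv ⊢
  have hab' : a * (1 + x) + b * (1 + x) = 1 + x := by rw [← add_mul, hab, one_mul]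
  constructor <;> nlinarith [mul_le_mul_of_nonneg_left hu.1 ha, mul_le_mul_of_nonneg_left hv.1 hb,
    mul_le_mul_of_nonneg_left hu.2 ha, mul_le_mul_of_nonneg_left hv.2 hb]

theorem norm_sub_pdes1_sq (u : EuclideanSpace ℝ (Fin 2)) :
    ‖u - pdes1‖ ^ 2 = (u 0 + 2) ^ 2 + u 1 ^ 2 := by
  simp [EuclideanSpace.real_norm_sq_eq, Fin.sum_univ_two, pdes1]

theorem norm_sub_pdes1_le_iff (v u : EuclideanSpace ℝ (Fin 2)) :
    ‖v - pdes1‖ ≤ ‖u - pdes1‖ ↔ (v 0 + 2) ^ 2 + v 1 ^ 2 ≤ (u 0 + 2) ^ 2 + u 1 ^ 2 := by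
  rw [← norm_sub_pdes1_sq, ← norm_sub_pdes1_sq, sq_le_sq₀ (norm_nonneg _) (norm_nonneg _)]

theorem one_one_mem_K1 (x : ℝ) : !₂[1, 1] ∈ K1 x :=
  ⟨le_rfl, by simp only [Matrix.cons_val_zero, Matrix.cons_val_one]; linarith⟩

theorem norm_one_one_sub_pdes1_le {x : ℝ} (hx₀ : 0 < x) (hx : x ≤ 1 / 3) :
    ∀ u ∈ K1 x, ‖!₂[1, 1] - pdes1‖ ≤ ‖u - pdes1‖ := by
  rintro u ⟨hu₀, hu₁⟩
  rw [norm_sub_pdes1_le_iff]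
  have hu₁' : 1 + 3 * (1 - u 0) ≤ u 1 := by
    have : 1 ≤ u 1 := by nlinarith
    nlinarith
  simp only [Matrix.cons_val_zero, Matrix.cons_val_one]
  nlinarith

theorem sq_le_one_add_sq_mul {a b v w : ℝ} (hb : 0 ≤ b) (h : b ≤ v + a * w) :
    b ^ 2 ≤ (1 + a ^ 2) * (v ^ 2 + w ^ 2) :=
  calc b ^ 2 ≤ (v + a * w) ^ 2 := pow_le_pow_left₀ hb h 2
    _ ≤ (1 + a ^ 2) * (v ^ 2 + w ^ 2) := by nlinarith [sq_nonneg (a * v - w)]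

/-- The projection of `pdes1` onto the line `u₀ + x u₁ = 1 + x`. -/
noncomputable def lineProj (x : ℝ) : EuclideanSpace ℝ (Fin 2) :=
  !₂[(1 + x - 2 * x ^ 2) / (1 + x ^ 2), (3 * x + x ^ 2) / (1 + x ^ 2)]

theorem lineProj_mem_K1 {x : ℝ} (hx : x ≤ 0 ∨ 1 / 3 < x) : lineProj x ∈ K1 x := by
  have hpos : 0 < 1 + x ^ 2 := by positivity
  simp only [K1, lineProj, Set.mem_ofPred_eq, Matrix.cons_val_zero, Matrix.cons_val_one]
  constructor
  · rw [div_le_one hpos]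
    rcases hx with hx | hx <;> nlinarith
  · apply le_of_eq
    field_simp
    ring

theorem norm_lineProj_sub_pdes1_le {x : ℝ} (hx : -2 ≤ x) :
    ∀ u ∈ K1 x, ‖lineProj x - pdes1‖ ≤ ‖u - pdes1‖ := by
  rintro u ⟨-, hu⟩
  rw [norm_sub_pdes1_le_iff]
  have hpos : 0 < 1 + x ^ 2 := by positivity
  have hproj : ((1 + x - 2 * x ^ 2) / (1 + x ^ 2) + 2) ^ 2 + ((3 * x + x ^ 2) / (1 + x ^ 2)) ^ 2
      = (3 + x) ^ 2 / (1 + x ^ 2) := by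
    field_simp
    ring
  simp only [lineProj, PiLp.toLp_apply, Matrix.cons_val_zero, Matrix.cons_val_one]
  rw [hproj, div_le_iff₀' hpos]
  exact sq_le_one_add_sq_mul (by linarith) (by linarith)

/-- the QP of Example 1 has the stated piecewise solution and is
discontinuous at `x = 0`. -/
theorem example1_solution (π : ℝ → EuclideanSpace ℝ (Fin 2))
    (hπ : ∀ x ∈ Set.Icc (-2 : ℝ) 2, π x ∈ K1 x ∧
      ∀ u ∈ K1 x, ‖π x - pdes1‖ ≤ ‖u - pdes1‖) :
    (∀ x ∈ Set.Ioc (0 : ℝ) (1 / 3), π x 0 = 1 ∧ π x 1 = 1) ∧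
    (∀ x ∈ Set.Icc (-2 : ℝ) 2, x ∉ Set.Ioc (0 : ℝ) (1 / 3) →
      π x 0 = (1 + x - 2 * x ^ 2) / (1 + x ^ 2) ∧
      π x 1 = (3 * x + x ^ 2) / (1 + x ^ 2)) ∧
    ¬ ContinuousWithinAt π (Set.Icc (-2 : ℝ) 2) 0 := by
  have hsol : ∀ x ∈ Set.Icc (-2 : ℝ) 2, ∀ c ∈ K1 x,
      (∀ u ∈ K1 x, ‖c - pdes1‖ ≤ ‖u - pdes1‖) → π x = c := fun x hx c hc hc_min =>
    eq_of_forall_norm_sub_le_of_convex (convex_K1 x) (hπ x hx).1 hc (hπ x hx).2 hc_min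
  have hA : ∀ x ∈ Set.Ioc (0 : ℝ) (1 / 3), π x = !₂[1, 1] := fun x ⟨hx₀, hx⟩ =>
    hsol x ⟨by linarith, by linarith⟩ _ (one_one_mem_K1 x) (norm_one_one_sub_pdes1_le hx₀ hx)
  have hB : ∀ x ∈ Set.Icc (-2 : ℝ) 2, x ∉ Set.Ioc (0 : ℝ) (1 / 3) → π x = lineProj x := by
    intro x hx hx'
    have hx_out : x ≤ 0 ∨ 1 / 3 < x := by
      by_contra! h
      exact hx' h
    exact hsol x hx _ (lineProj_mem_K1 hx_out) (norm_lineProj_sub_pdes1_le hx.1)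
  refine ⟨fun x hx => by simp [hA x hx], fun x hx hx' => by simp [hB x hx hx', lineProj], ?_⟩
  intro hcont
  have hlim : Tendsto π (𝓝[>] 0) (𝓝 (π 0)) := hcont.tendsto.mono_left
    (nhdsWithin_le_of_mem (mem_nhdsWithin_of_mem_nhds (Icc_mem_nhds (by norm_num) (by norm_num))))
  have hconst : π =ᶠ[𝓝[>] 0] fun _ => !₂[1, 1] :=
    eventually_of_mem (Ioc_mem_nhdsGT (by norm_num : (0 : ℝ) < 1 / 3)) hA
  have h0 : π 0 = !₂[1, 1] := tendsto_nhds_unique (hlim.congr' hconst) tendsto_const_nhds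
  have h0' := congrArg (· 1) h0
  simp [hB 0 (by norm_num) (by simp), lineProj] at h0'
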